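/- arXiv:2205.12620 — 4 statements merged into one kernel-verified Lean document; each statement's English description precedes it below -/
import Mathlib

section
/- Let 0 < r < R. Define u : EuclideanSpace ℝ (Fin 3) → ℝ by u(x) = r(R − ‖x‖) / (‖x‖(R − r)). Then u is twice continuously differentiable on the open spherical shell Ω = {x : r < ‖x‖ < R} and harmonic there (Δu = 0 on Ω); u(x) = 1 whenever ‖x‖ = r; u(x) = 0 whenever ‖x‖ = R; and at every point x with ‖x‖ = R the derivative of u in the outward radial direction equals −r/(R(R − r)), i.e. fderiv ℝ u x (R⁻¹ • x) = −r/(R(R − r)). Consequently, with λ = −r/(R(R − r)), the shell Ω together with u solves the exterior Bernoulli problem with fixed boundary the sphere of radius r. -/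
/-!
Away from the origin, `u = a ‖x‖⁻¹ + b` with `a = rR/(R − r)` and `b = −r/(R − r)`. In `ℝᵈ` the
Laplacian of `‖x‖ⁿ` is `n (n + d − 2) ‖x‖ⁿ⁻²`, which vanishes for the Newtonian exponent
`n = 2 − d = −1` when `d = 3`; and the gradient of `u` is `−a x / ‖x‖³`, whose component along the
outward normal on `‖x‖ = R` is `−a / R²`.
-/

/-- The Laplacian: sum of second directional derivatives along the standard
orthonormal basis of `EuclideanSpace ℝ (Fin d)`. -/
noncomputable def laplacian {d : ℕ} (u : EuclideanSpace ℝ (Fin d) → ℝ)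
    (x : EuclideanSpace ℝ (Fin d)) : ℝ :=
  ∑ i, fderiv ℝ (fun y => fderiv ℝ u y (EuclideanSpace.single i 1)) x (EuclideanSpace.single i 1)

open Filter Topology RealInnerProductSpace

section Norm

variable {E : Type*} [NormedAddCommGroup E] [InnerProductSpace ℝ E] {x : E}

theorem hasFDerivAt_norm_of_ne_zero (hx : x ≠ 0) :
    HasFDerivAt (‖·‖) (‖x‖⁻¹ • innerSL ℝ x) x := by
  have hsq : ‖x‖ ^ 2 ≠ 0 := by positivity
  convert (hasStrictFDerivAt_norm_sq x).hasFDerivAt.sqrt hsq using 1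
  · simp [Real.sqrt_sq (norm_nonneg _)]
  · rw [Real.sqrt_sq (norm_nonneg _), two_smul, ← two_smul ℝ, smul_smul]
    congr 1
    field_simp

theorem hasFDerivAt_norm_zpow (n : ℤ) (hx : x ≠ 0) :
    HasFDerivAt (fun y : E => ‖y‖ ^ n) ((n * ‖x‖ ^ (n - 2)) • innerSL ℝ x) x := by
  have hn : ‖x‖ ≠ 0 := norm_ne_zero_iff.2 hx
  refine ((hasDerivAt_zpow n ‖x‖ (.inl hn)).comp_hasFDerivAt x
    (hasFDerivAt_norm_of_ne_zero hx)).congr_fderiv ?_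
  rw [smul_smul, mul_assoc, ← zpow_neg_one, ← zpow_add₀ hn]
  ring_nf

theorem fderiv_norm_zpow_apply (n : ℤ) (hx : x ≠ 0) (v : E) :
    fderiv ℝ (fun y : E => ‖y‖ ^ n) x v = n * ‖x‖ ^ (n - 2) * ⟪x, v⟫ := by
  simp [(hasFDerivAt_norm_zpow n hx).fderiv, mul_assoc]

theorem fderiv_fderiv_norm_zpow_apply (n : ℤ) (hx : x ≠ 0) (e e' : E) :
    fderiv ℝ (fun y => fderiv ℝ (fun z : E => ‖z‖ ^ n) y e) x e' =
      n * ((n - 2) * ‖x‖ ^ (n - 4) * ⟪x, e⟫ * ⟪x, e'⟫ + ‖x‖ ^ (n - 2) * ⟪e, e'⟫) := by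
  have hfirst : (fun y => fderiv ℝ (fun z : E => ‖z‖ ^ n) y e) =ᶠ[𝓝 x]
      fun y => n * (‖y‖ ^ (n - 2) * ⟪e, y⟫) := by
    filter_upwards [isOpen_compl_singleton.mem_nhds hx] with y hy
    rw [fderiv_norm_zpow_apply n hy, real_inner_comm, mul_assoc]
  have hsecond : HasFDerivAt (fun y => (n : ℝ) * (‖y‖ ^ (n - 2) * ⟪e, y⟫)) _ x :=
    ((hasFDerivAt_norm_zpow (n - 2) hx).mul (innerSL ℝ e).hasFDerivAt).const_mul _
  rw [hfirst.fderiv_eq, hsecond.fderiv]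
  simp only [smul_apply, add_apply, innerSL_apply_apply, smul_eq_mul]
  rw [real_inner_comm x e, show n - 2 - 2 = n - 4 by ring]
  push_cast
  ring

end Norm

section Laplacian

variable {d : ℕ} {x : EuclideanSpace ℝ (Fin d)}

theorem Filter.EventuallyEq.laplacian_eq {f g : EuclideanSpace ℝ (Fin d) → ℝ}
    (h : f =ᶠ[𝓝 x] g) : laplacian f x = laplacian g x := by
  refine Finset.sum_congr rfl fun i _ => ?_
  have hdir : (fun y => fderiv ℝ f y (EuclideanSpace.single i 1)) =ᶠ[𝓝 x]
      fun y => fderiv ℝ g y (EuclideanSpace.single i 1) :=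
    (h.fderiv (𝕜 := ℝ)).mono fun y hy => by simp only [hy]
  rw [hdir.fderiv_eq]

theorem laplacian_const_mul_add_const (a b : ℝ) (f : EuclideanSpace ℝ (Fin d) → ℝ) :
    laplacian (fun y => a * f y + b) x = a * laplacian f x := by
  have hlin : ∀ g : EuclideanSpace ℝ (Fin d) → ℝ, fderiv ℝ (fun y => a * g y) = a • fderiv ℝ g :=
    fun g => fderiv_const_smul_field (f := g) a
  simp only [laplacian, fderiv_add_const, hlin, Pi.smul_apply, smul_apply,
    smul_eq_mul, Finset.mul_sum]

theorem laplacian_norm_zpow (n : ℤ) (hx : x ≠ 0) :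
    laplacian (fun y => ‖y‖ ^ n) x = n * (n + d - 2) * ‖x‖ ^ (n - 2) := by
  have hn : ‖x‖ ≠ 0 := norm_ne_zero_iff.2 hx
  have hsum : ∑ i, ⟪x, EuclideanSpace.single i (1 : ℝ)⟫ ^ 2 = ‖x‖ ^ 2 := by
    simp [EuclideanSpace.inner_single_right, EuclideanSpace.real_norm_sq_eq]
  have hpow : ‖x‖ ^ (n - 2) = ‖x‖ ^ (n - 4) * ‖x‖ ^ 2 := by
    rw [← zpow_natCast, ← zpow_add₀ hn]
    ring_nf
  have hunit : ∀ i : Fin d, ⟪EuclideanSpace.single i (1 : ℝ), EuclideanSpace.single i 1⟫ = 1 := by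
    simp
  simp only [laplacian, fderiv_fderiv_norm_zpow_apply n hx, hunit, mul_one, mul_add,
    Finset.sum_add_distrib, mul_assoc, ← sq, ← Finset.mul_sum, hsum, Finset.sum_const,
    Finset.card_univ, Fintype.card_fin, nsmul_eq_mul]
  rw [hpow]
  ring

end Laplacian

noncomputable def shellPotential {E : Type*} [NormedAddCommGroup E] (r R : ℝ) (x : E) : ℝ :=
  r * (R - ‖x‖) / (‖x‖ * (R - r))

theorem shellPotential_eventuallyEq {E : Type*} [NormedAddCommGroup E] {r R : ℝ} {x : E}
    (hx : x ≠ 0) :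
    shellPotential r R =ᶠ[𝓝 x] fun y => r * R / (R - r) * ‖y‖ ^ (-1 : ℤ) + -r / (R - r) := by
  filter_upwards [isOpen_compl_singleton.mem_nhds hx] with y hy
  have hny : ‖y‖ ≠ 0 := norm_ne_zero_iff.2 hy
  rw [shellPotential, zpow_neg_one, ← div_div, show r * (R - ‖y‖) / ‖y‖ = r * R * ‖y‖⁻¹ - r by
    field_simp]
  ring

section ShellPotential

variable {E : Type*} [NormedAddCommGroup E] [InnerProductSpace ℝ E] {r R : ℝ} {x : E}

theorem contDiffAt_shellPotential {n : WithTop ℕ∞} (hx : x ≠ 0) :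
    ContDiffAt ℝ n (shellPotential r R) x := by
  refine ContDiffAt.congr_of_eventuallyEq ?_ (shellPotential_eventuallyEq hx)
  simp only [zpow_neg_one]
  exact (contDiffAt_const.mul ((contDiffAt_norm ℝ hx).inv (norm_ne_zero_iff.2 hx))).add
    contDiffAt_const

theorem fderiv_shellPotential_apply (hx : x ≠ 0) (v : E) :
    fderiv ℝ (shellPotential r R) x v = -(r * R / (R - r)) / ‖x‖ ^ 3 * ⟪x, v⟫ := by
  have h := ((hasFDerivAt_norm_zpow (-1) hx).const_mul (r * R / (R - r))).add_const (-r / (R - r))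
  rw [(shellPotential_eventuallyEq hx).fderiv_eq, h.fderiv]
  simp only [smul_apply, coe_innerSL_apply, smul_eq_mul]
  norm_num
  ring

end ShellPotential

theorem laplacian_shellPotential {r R : ℝ} {x : EuclideanSpace ℝ (Fin 3)} (hx : x ≠ 0) :
    laplacian (shellPotential r R) x = 0 := by
  rw [(shellPotential_eventuallyEq hx).laplacian_eq, laplacian_const_mul_add_const,
    laplacian_norm_zpow _ hx]
  norm_num

/-- The spherical shell `r < ‖x‖ < R` with `u x = r(R − ‖x‖)/(‖x‖(R − r))` solves the exterior
Bernoulli problem in dimension 3 with `λ = −r/(R(R − r))`. -/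
theorem exterior_bernoulli_shell_3d (r R : ℝ) (hr : 0 < r) (hrR : r < R) :
    ContDiffOn ℝ 2 (fun x : EuclideanSpace ℝ (Fin 3) => r * (R - ‖x‖) / (‖x‖ * (R - r)))
      {x : EuclideanSpace ℝ (Fin 3) | r < ‖x‖ ∧ ‖x‖ < R} ∧
    (∀ x : EuclideanSpace ℝ (Fin 3), r < ‖x‖ → ‖x‖ < R →
      laplacian (fun x => r * (R - ‖x‖) / (‖x‖ * (R - r))) x = 0) ∧
    (∀ x : EuclideanSpace ℝ (Fin 3), ‖x‖ = r →
      r * (R - ‖x‖) / (‖x‖ * (R - r)) = 1) ∧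
    (∀ x : EuclideanSpace ℝ (Fin 3), ‖x‖ = R →
      r * (R - ‖x‖) / (‖x‖ * (R - r)) = 0) ∧
    (∀ x : EuclideanSpace ℝ (Fin 3), ‖x‖ = R →
      fderiv ℝ (fun x : EuclideanSpace ℝ (Fin 3) => r * (R - ‖x‖) / (‖x‖ * (R - r))) x
        (R⁻¹ • x) = -r / (R * (R - r))) := by
  have hR : 0 < R := hr.trans hrR
  have hRr : R - r ≠ 0 := sub_ne_zero.2 hrR.ne'
  have ne_zero_of_lt_norm {x : EuclideanSpace ℝ (Fin 3)} (h : r < ‖x‖) : x ≠ 0 :=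
    norm_pos_iff.1 (hr.trans h)
  refine ⟨fun x hx => (contDiffAt_shellPotential (ne_zero_of_lt_norm hx.1)).contDiffWithinAt,
    fun x hx _ => laplacian_shellPotential (ne_zero_of_lt_norm hx), fun x hx => ?_,
    fun x hx => ?_, fun x hx => ?_⟩
  · rw [hx]
    field_simp
  · rw [hx, sub_self, mul_zero, zero_div]
  · change fderiv ℝ (shellPotential r R) x _ = _
    rw [fderiv_shellPotential_apply (norm_pos_iff.1 (hx ▸ hR)), real_inner_smul_right,
      real_inner_self_eq_norm_sq, hx]
    field_simp
end

section
/- Let d ≥ 1, let M : ℝ → Matrix (Fin d) (Fin d) ℝ satisfy M(0) = 1 (the identity matrix) and HasDerivAt M B 0 for some matrix B, and let n ∈ EuclideanSpace ℝ (Fin d) with ‖n‖ = 1. Then the map t ↦ det(M(t)) · ‖(M(t)⁻¹)ᵀ.mulVec n‖ (Euclidean norm) has derivative trace(B) − ⟪B.mulVec n, n⟫ at t = 0, where ⟪·,·⟫ is the Euclidean inner product. -/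
/-!
Jacobi's formula at the identity gives `(det M)'(0) = tr B`, and `(M⁻¹)'(0) = -B`, so the
transported normal `M⁻ᵀ n = n ᵥ* M⁻¹` moves with velocity `-(n ᵥ* B)`. As `‖n‖ = 1`, its
length changes at rate `⟪n, -(n ᵥ* B)⟫ = -⟪B n, n⟫`, and the product rule adds the two rates.
-/

open Matrix
open scoped RealInnerProductSpace

section Inverse

variable {𝕜 n : Type*} [NontriviallyNormedField 𝕜] [CompleteSpace 𝕜]
  [Fintype n] [DecidableEq n]

attribute [local instance] Matrix.linftyOpNormedRing Matrix.linftyOpNormedAlgebra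

theorem HasDerivAt.matrix_inv {M : 𝕜 → Matrix n n 𝕜} {B : Matrix n n 𝕜} {x : 𝕜}
    (hM : HasDerivAt M B x) (hx : IsUnit (M x)) :
    HasDerivAt (fun t => (M t)⁻¹) (-((M x)⁻¹ * B * (M x)⁻¹)) x := by
  -- The uniform structure of the operator norm is not reducibly the product one.
  have : @CompleteSpace (Matrix n n 𝕜) PseudoMetricSpace.toUniformSpace :=
    FiniteDimensional.complete 𝕜 _
  obtain ⟨u, hu⟩ := hx
  have hinv := (hasFDerivAt_ringInverse (𝕜 := 𝕜) u).comp_hasDerivAt_of_eq x hM hu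
  simp only [Matrix.coe_units_inv, hu] at hinv
  rw [show (fun t => (M t)⁻¹) = Ring.inverse ∘ M from
    funext fun t => Matrix.nonsing_inv_eq_ringInverse (M t)]
  exact hinv.congr_deriv (by simp)

end Inverse

attribute [local instance] Matrix.normedAddCommGroup Matrix.normedSpace

namespace Matrix

variable {𝕜 n : Type*} [NontriviallyNormedField 𝕜] [Fintype n] [DecidableEq n]

open Polynomial in
theorem hasDerivAt_det_one_add_smul (B : Matrix n n 𝕜) :
    HasDerivAt (fun t : 𝕜 => (1 + t • B).det) B.trace 0 := by
  have hP := (det (1 + (X : 𝕜[X]) • B.map C)).hasDerivAt 0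
  rw [derivative_det_one_add_X_smul] at hP
  convert hP using 2 with t
  simp [eval_det, ← smul_eq_mul_diagonal]

theorem differentiable_det : Differentiable 𝕜 (fun A : Matrix n n 𝕜 => A.det) := by
  simp only [det_apply]
  fun_prop

theorem fderiv_det_one_apply (B : Matrix n n 𝕜) :
    fderiv 𝕜 (fun A : Matrix n n 𝕜 => A.det) 1 B = B.trace := by
  have hline : HasDerivAt (fun t : 𝕜 => 1 + t • B) B 0 :=
    (((hasDerivAt_id (0 : 𝕜)).smul_const B).const_add 1).congr_deriv (one_smul _ _)
  have := (differentiable_det 1).hasFDerivAt.comp_hasDerivAt_of_eq 0 hline (by simp)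
  exact this.unique (hasDerivAt_det_one_add_smul B)

end Matrix

theorem HasDerivAt.det_of_eq_one {𝕜 n : Type*} [NontriviallyNormedField 𝕜] [Fintype n]
    [DecidableEq n] {M : 𝕜 → Matrix n n 𝕜} {B : Matrix n n 𝕜} {x : 𝕜}
    (hM : HasDerivAt M B x) (hx : M x = 1) :
    HasDerivAt (fun t => (M t).det) B.trace x := by
  have := (differentiable_det 1).hasFDerivAt.comp_hasDerivAt_of_eq x hM hx.symm
  exact this.congr_deriv (fderiv_det_one_apply B)

theorem HasDerivAt.norm {F : Type*} [NormedAddCommGroup F] [InnerProductSpace ℝ F]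
    {f : ℝ → F} {f' : F} {x : ℝ} (hf : HasDerivAt f f' x) (hx : f x ≠ 0) :
    HasDerivAt (fun t => ‖f t‖) (⟪f x, f'⟫ / ‖f x‖) x := by
  have := hf.norm_sq.sqrt (by positivity)
  simp only [Real.sqrt_sq (norm_nonneg _)] at this
  exact this.congr_deriv (by field_simp)

theorem HasDerivAt.toLp_vecMul {𝕜 m n : Type*} [RCLike 𝕜] [Fintype m] [Fintype n]
    {M : 𝕜 → Matrix m n 𝕜} {B : Matrix m n 𝕜} {x : 𝕜} (v : EuclideanSpace 𝕜 m)
    (hM : HasDerivAt M B x) :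
    HasDerivAt (fun t => WithLp.toLp 2 (v.ofLp ᵥ* M t)) (WithLp.toLp 2 (v.ofLp ᵥ* B)) x :=
  ((WithLp.linearEquiv 2 𝕜 (n → 𝕜)).symm.toLinearMap ∘ₗ
    vecMulBilin 𝕜 𝕜 v.ofLp).toContinuousLinearMap.hasFDerivAt.comp_hasDerivAt x hM

theorem EuclideanSpace.inner_toLp_vecMul {ι : Type*} [Fintype ι]
    (A : Matrix ι ι ℝ) (x y : EuclideanSpace ℝ ι) :
    ⟪x, WithLp.toLp 2 (y.ofLp ᵥ* A)⟫ = ⟪WithLp.toLp 2 (A *ᵥ x.ofLp), y⟫ := by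
  simp only [EuclideanSpace.inner_eq_star_dotProduct, star_trivial]
  exact (dotProduct_mulVec _ _ _).symm

theorem hasDerivAt_boundary_jacobian_general (d : ℕ)
    (M : ℝ → Matrix (Fin d) (Fin d) ℝ) (B : Matrix (Fin d) (Fin d) ℝ)
    (hM0 : M 0 = 1) (hM : HasDerivAt M B 0)
    (n : EuclideanSpace ℝ (Fin d)) (hn : ‖n‖ = 1) :
    HasDerivAt
      (fun t => (M t).det *
        ‖(WithLp.equiv 2 (Fin d → ℝ)).symm
          ((((M t)⁻¹)ᵀ).mulVec ((WithLp.equiv 2 (Fin d → ℝ)) n))‖)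
      (B.trace -
        ⟪(WithLp.equiv 2 (Fin d → ℝ)).symm (B.mulVec ((WithLp.equiv 2 (Fin d → ℝ)) n)), n⟫)
      0 := by
  simp only [WithLp.equiv_apply, WithLp.equiv_symm_apply, mulVec_transpose]
  have hinv : HasDerivAt (fun t => (M t)⁻¹) (-B) 0 := by
    simpa [hM0] using hM.matrix_inv (hM0 ▸ isUnit_one)
  have hvec0 : WithLp.toLp 2 (n.ofLp ᵥ* (M 0)⁻¹) = n := by simp [hM0]
  have hnorm := (hinv.toLp_vecMul n).norm <| by
    rw [hvec0, ← norm_ne_zero_iff, hn]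
    exact one_ne_zero
  refine ((hM.det_of_eq_one hM0).mul hnorm).congr_deriv ?_
  rw [hvec0, hM0, hn, EuclideanSpace.inner_toLp_vecMul]
  simp [neg_mulVec, sub_eq_add_neg]

/-- Derivative at the identity of the transported boundary Jacobian
`t ↦ det(M t) · ‖(M t)⁻ᵀ n‖` (Euclidean norm), for a unit vector `n`: if `M 0 = 1` and `M` has
derivative `B` at `t = 0`, the derivative is `trace B − ⟪B n, n⟫`. -/
theorem hasDerivAt_boundary_jacobian (d : ℕ) (hd : 1 ≤ d)
    (M : ℝ → Matrix (Fin d) (Fin d) ℝ) (B : Matrix (Fin d) (Fin d) ℝ)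
    (hM0 : M 0 = 1) (hM : HasDerivAt M B 0)
    (n : EuclideanSpace ℝ (Fin d)) (hn : ‖n‖ = 1) :
    HasDerivAt
      (fun t => (M t).det *
        ‖(WithLp.equiv 2 (Fin d → ℝ)).symm
          ((((M t)⁻¹)ᵀ).mulVec ((WithLp.equiv 2 (Fin d → ℝ)) n))‖)
      (B.trace -
        ⟪(WithLp.equiv 2 (Fin d → ℝ)).symm (B.mulVec ((WithLp.equiv 2 (Fin d → ℝ)) n)), n⟫)
      0 :=
  hasDerivAt_boundary_jacobian_general d M B hM0 hM n hn
end

section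
/- Let E be a real normed vector space, Ω ⊆ E open, x ∈ frontier Ω, and v ∈ E such that x − t • v ∈ Ω for all sufficiently small t > 0. Let u₁, u₂ : E → ℝ be differentiable at x, suppose u₂ = 0 on the closure of Ω, and suppose the coupled Robin conditions hold at x: fderiv ℝ u₁ x v − u₂(x) = λ and u₁(x) + fderiv ℝ u₂ x v = 0, for some λ ∈ ℝ. Then u₁(x) = 0 and fderiv ℝ u₁ x v = λ; that is, the overdetermined Bernoulli boundary conditions hold at x. -/
/-!
Along the inward ray `t ↦ x - t • v` the function `u₂` vanishes identically, so by continuity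
`u₂ x = 0`, and its one-sided derivative there, `-(∂ᵥu₂)(x)`, is zero. The coupled Robin
conditions then collapse to `u₁ x = 0` and `∂ᵥu₁ x = λ`.
-/

open Filter Topology

section Ray

variable {E F : Type*} [NormedAddCommGroup E] [NormedSpace ℝ E] {x w : E}

theorem ContinuousAt.eq_of_eventually_eq_on_ray [TopologicalSpace F] [T2Space F] {f : E → F}
    {c : F} (hf : ContinuousAt f x) (hray : ∀ᶠ t in 𝓝[>] (0 : ℝ), f (x + t • w) = c) :
    f x = c := by
  have hcont : ContinuousAt (fun t : ℝ => f (x + t • w)) 0 :=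
    ContinuousAt.comp (g := f) (by simpa using hf) (by fun_prop)
  have hlim := hcont.tendsto.mono_left (nhdsWithin_le_nhds (s := Set.Ioi 0))
  simpa using tendsto_nhds_unique hlim (tendsto_const_nhds.congr' (EventuallyEq.symm hray))

theorem HasFDerivAt.apply_eq_zero_of_eventually_eq_zero_on_ray [NormedAddCommGroup F] [NormedSpace ℝ F]
    {f : E → F} {f' : E →L[ℝ] F}
    (hf : HasFDerivAt f f' x) (hray : ∀ᶠ t in 𝓝[>] (0 : ℝ), f (x + t • w) = 0) :
    f' w = 0 := by
  have hline : HasDerivAt (fun t : ℝ => x + t • w) w 0 := by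
    simpa using ((hasDerivAt_id (0 : ℝ)).smul_const w).const_add x
  have hderiv : HasDerivWithinAt (fun t : ℝ => f (x + t • w)) (f' w) (Set.Ioi 0) 0 :=
    (hf.comp_hasDerivAt_of_eq 0 hline (by simp)).hasDerivWithinAt
  have hx : f (x + (0 : ℝ) • w) = 0 := by
    simpa using hf.continuousAt.eq_of_eventually_eq_on_ray hray
  have hderiv_zero : HasDerivWithinAt (fun t : ℝ => f (x + t • w)) 0 (Set.Ioi 0) 0 :=
    (hasDerivWithinAt_const 0 _ 0).congr_of_eventuallyEq hray hx
  exact (uniqueDiffWithinAt_Ioi 0).eq_deriv _ hderiv hderiv_zero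

end Ray

theorem ccbm_recovers_bernoulli_conditions_general {E : Type*} [NormedAddCommGroup E]
    [NormedSpace ℝ E] (Ω : Set E) (x : E) (v : E)
    (hv : ∃ ε > 0, ∀ t : ℝ, 0 < t → t < ε → x - t • v ∈ Ω)
    (u₁ u₂ : E → ℝ) (h₂ : DifferentiableAt ℝ u₂ x)
    (hzero : ∀ y ∈ closure Ω, u₂ y = 0) (lam : ℝ)
    (hrobin₁ : fderiv ℝ u₁ x v - u₂ x = lam)
    (hrobin₂ : u₁ x + fderiv ℝ u₂ x v = 0) :
    u₁ x = 0 ∧ fderiv ℝ u₁ x v = lam := by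
  obtain ⟨ε, hε, hmem⟩ := hv
  have hray : ∀ᶠ t in 𝓝[>] (0 : ℝ), u₂ (x + t • -v) = 0 := by
    filter_upwards [Ioo_mem_nhdsGT hε] with t ht
    simpa [← sub_eq_add_neg] using hzero _ (subset_closure (hmem t ht.1 ht.2))
  have hu₂ : u₂ x = 0 := h₂.continuousAt.eq_of_eventually_eq_on_ray hray
  have hdu₂ : fderiv ℝ u₂ x v = 0 := by
    simpa using h₂.hasFDerivAt.apply_eq_zero_of_eventually_eq_zero_on_ray hray
  constructor <;> linarith

/-- If the imaginary part `u₂` of the CCBM solution vanishes on the closure of `Ω`, then at a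
free-boundary point `x` (with `−v` pointing into `Ω`) the coupled Robin conditions
`∂_v u₁ − u₂ = λ` and `u₁ + ∂_v u₂ = 0` imply the overdetermined Bernoulli conditions
`u₁ = 0` and `∂_v u₁ = λ` at `x`. -/
theorem ccbm_recovers_bernoulli_conditions {E : Type*} [NormedAddCommGroup E]
    [NormedSpace ℝ E] (Ω : Set E) (hΩ : IsOpen Ω) (x : E) (hx : x ∈ frontier Ω) (v : E)
    (hv : ∃ ε > 0, ∀ t : ℝ, 0 < t → t < ε → x - t • v ∈ Ω)
    (u₁ u₂ : E → ℝ) (h₁ : DifferentiableAt ℝ u₁ x) (h₂ : DifferentiableAt ℝ u₂ x)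
    (hzero : ∀ y ∈ closure Ω, u₂ y = 0) (lam : ℝ)
    (hrobin₁ : fderiv ℝ u₁ x v - u₂ x = lam)
    (hrobin₂ : u₁ x + fderiv ℝ u₂ x v = 0) :
    u₁ x = 0 ∧ fderiv ℝ u₁ x v = lam :=
  ccbm_recovers_bernoulli_conditions_general Ω x v hv u₁ u₂ h₂ hzero lam hrobin₁ hrobin₂
end

section
/- Let d ≥ 1, let φ, ψ : EuclideanSpace ℝ (Fin d) → ℝ be twice continuously differentiable, and let V : EuclideanSpace ℝ (Fin d) → EuclideanSpace ℝ (Fin d) be continuously differentiable. Then at every point the following pointwise identity holds: (div V)(∇φ·∇ψ) − (DV(∇φ))·∇ψ − ∇φ·(DV(∇ψ)) = (Δφ)(V·∇ψ) + (Δψ)(V·∇φ) + div((∇φ·∇ψ)V − (V·∇ψ)∇φ − (V·∇φ)∇ψ), where ∇ denotes the gradient, · the Euclidean inner product, DV(w) the Fréchet derivative of V applied to the vector w, div W the trace of the Fréchet derivative of a vector field W, and Δ the Laplacian. -/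
open scoped RealInnerProductSpace

/-- The divergence of a vector field: the trace of its Fréchet derivative, computed along the
standard orthonormal basis. -/
noncomputable def diverg {d : ℕ}
    (W : EuclideanSpace ℝ (Fin d) → EuclideanSpace ℝ (Fin d))
    (x : EuclideanSpace ℝ (Fin d)) : ℝ :=
  ∑ i, ⟪fderiv ℝ W x (EuclideanSpace.single i 1), EuclideanSpace.single i 1⟫

section Hessian

variable {F : Type*} [NormedAddCommGroup F] [InnerProductSpace ℝ F] [CompleteSpace F]
  {f : F → ℝ} {x : F}

theorem inner_fderiv_gradient (f : F → ℝ) (x v w : F) :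
    ⟪fderiv ℝ (gradient f) x v, w⟫ = fderiv ℝ (fderiv ℝ f) x v w := by
  have hgrad : gradient f = (InnerProductSpace.toDual ℝ F).symm ∘ fderiv ℝ f := rfl
  rw [hgrad, LinearIsometryEquiv.comp_fderiv]
  exact InnerProductSpace.toDual_symm_apply

theorem ContDiffAt.inner_fderiv_gradient_comm (hf : ContDiffAt ℝ 2 f x) (v w : F) :
    ⟪fderiv ℝ (gradient f) x v, w⟫ = ⟪v, fderiv ℝ (gradient f) x w⟫ := by
  rw [inner_fderiv_gradient, real_inner_comm, inner_fderiv_gradient,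
    (hf.isSymmSndFDerivAt (by simp)).eq]

theorem ContDiffAt.differentiableAt_gradient (hf : ContDiffAt ℝ 2 f x) :
    DifferentiableAt ℝ (gradient f) x :=
  ((InnerProductSpace.toDual ℝ F).symm.contDiff.contDiffAt.comp x
    (hf.fderiv_right (m := 1) le_rfl)).differentiableAt one_ne_zero

end Hessian

section Divergence

variable {d : ℕ} {x : EuclideanSpace ℝ (Fin d)}

theorem sum_apply_single_mul_inner_single (L : EuclideanSpace ℝ (Fin d) →L[ℝ] ℝ)
    (v : EuclideanSpace ℝ (Fin d)) :
    ∑ i, L (EuclideanSpace.single i 1) * ⟪v, EuclideanSpace.single i 1⟫ = L v := by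
  classical
  conv_rhs => rw [← (EuclideanSpace.basisFun (Fin d) ℝ).sum_repr' v]
  simp [EuclideanSpace.basisFun_apply, real_inner_comm, mul_comm]

theorem diverg_sub {W₁ W₂ : EuclideanSpace ℝ (Fin d) → EuclideanSpace ℝ (Fin d)}
    (hW₁ : DifferentiableAt ℝ W₁ x) (hW₂ : DifferentiableAt ℝ W₂ x) :
    diverg (fun y => W₁ y - W₂ y) x = diverg W₁ x - diverg W₂ x := by
  simp only [diverg, fderiv_fun_sub hW₁ hW₂, sub_apply, inner_sub_left,
    Finset.sum_sub_distrib]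

theorem diverg_smul {c : EuclideanSpace ℝ (Fin d) → ℝ}
    {Z : EuclideanSpace ℝ (Fin d) → EuclideanSpace ℝ (Fin d)}
    (hc : DifferentiableAt ℝ c x) (hZ : DifferentiableAt ℝ Z x) :
    diverg (fun y => c y • Z y) x = fderiv ℝ c x (Z x) + c x * diverg Z x := by
  simp only [diverg, fderiv_fun_smul hc hZ, add_apply,
    smul_apply, ContinuousLinearMap.smulRight_apply, inner_add_left,
    real_inner_smul_left, Finset.sum_add_distrib, ← Finset.mul_sum,
    sum_apply_single_mul_inner_single]
  ring

theorem diverg_gradient {f : EuclideanSpace ℝ (Fin d) → ℝ}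
    (hf : DifferentiableAt ℝ (fderiv ℝ f) x) :
    diverg (gradient f) x = laplacian f x := by
  refine Finset.sum_congr rfl fun i _ => ?_
  rw [inner_fderiv_gradient, fderiv_clm_apply hf (differentiableAt_const _)]
  simp

end Divergence

theorem pointwise_divergence_identity_general (d : ℕ)
    (φ ψ : EuclideanSpace ℝ (Fin d) → ℝ)
    (V : EuclideanSpace ℝ (Fin d) → EuclideanSpace ℝ (Fin d))
    (hφ : ContDiff ℝ 2 φ) (hψ : ContDiff ℝ 2 ψ) (hV : ContDiff ℝ 1 V) :
    ∀ x : EuclideanSpace ℝ (Fin d),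
      diverg V x * ⟪gradient φ x, gradient ψ x⟫
        - ⟪fderiv ℝ V x (gradient φ x), gradient ψ x⟫
        - ⟪gradient φ x, fderiv ℝ V x (gradient ψ x)⟫
      = laplacian φ x * ⟪V x, gradient ψ x⟫
        + laplacian ψ x * ⟪V x, gradient φ x⟫
        + diverg (fun y =>
            ⟪gradient φ y, gradient ψ y⟫ • V y
            - ⟪V y, gradient ψ y⟫ • gradient φ y
            - ⟪V y, gradient φ y⟫ • gradient ψ y) x := by
  intro x
  have dV : DifferentiableAt ℝ V x := hV.differentiable one_ne_zero x
  have dDφ : DifferentiableAt ℝ (fderiv ℝ φ) x :=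
    (hφ.fderiv_right (m := 1) le_rfl).differentiable one_ne_zero x
  have dDψ : DifferentiableAt ℝ (fderiv ℝ ψ) x :=
    (hψ.fderiv_right (m := 1) le_rfl).differentiable one_ne_zero x
  have dGφ : DifferentiableAt ℝ (gradient φ) x := hφ.contDiffAt.differentiableAt_gradient
  have dGψ : DifferentiableAt ℝ (gradient ψ) x := hψ.contDiffAt.differentiableAt_gradient
  have dF := dGφ.inner ℝ dGψ
  have dG := dV.inner ℝ dGψ
  have dH := dV.inner ℝ dGφ
  rw [diverg_sub ((dF.fun_smul dV).fun_sub (dG.fun_smul dGφ)) (dH.fun_smul dGψ),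
    diverg_sub (dF.fun_smul dV) (dG.fun_smul dGφ), diverg_smul dF dV, diverg_smul dG dGφ,
    diverg_smul dH dGψ, diverg_gradient dDφ, diverg_gradient dDψ,
    fderiv_inner_apply ℝ dGφ dGψ, fderiv_inner_apply ℝ dV dGψ,
    fderiv_inner_apply ℝ dV dGφ]
  have hessφ := hφ.contDiffAt.inner_fderiv_gradient_comm (x := x) (V x) (gradient ψ x)
  have hessψ := hψ.contDiffAt.inner_fderiv_gradient_comm (x := x) (V x) (gradient φ x)
  linarith [real_inner_comm (gradient φ x) (fderiv ℝ (gradient ψ) x (V x)),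
    real_inner_comm (gradient φ x) (fderiv ℝ V x (gradient ψ x))]

/-- The pointwise divergence-form identity underlying the domain-integral formula of the
shape-gradient computation:
`(div V)(∇φ·∇ψ) − (DV ∇φ)·∇ψ − ∇φ·(DV ∇ψ)
  = Δφ (V·∇ψ) + Δψ (V·∇φ) + div((∇φ·∇ψ)V − (V·∇ψ)∇φ − (V·∇φ)∇ψ)`. -/
theorem pointwise_divergence_identity (d : ℕ) (hd : 1 ≤ d)
    (φ ψ : EuclideanSpace ℝ (Fin d) → ℝ)
    (V : EuclideanSpace ℝ (Fin d) → EuclideanSpace ℝ (Fin d))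
    (hφ : ContDiff ℝ 2 φ) (hψ : ContDiff ℝ 2 ψ) (hV : ContDiff ℝ 1 V) :
    ∀ x : EuclideanSpace ℝ (Fin d),
      diverg V x * ⟪gradient φ x, gradient ψ x⟫
        - ⟪fderiv ℝ V x (gradient φ x), gradient ψ x⟫
        - ⟪gradient φ x, fderiv ℝ V x (gradient ψ x)⟫
      = laplacian φ x * ⟪V x, gradient ψ x⟫
        + laplacian ψ x * ⟪V x, gradient φ x⟫
        + diverg (fun y =>
            ⟪gradient φ y, gradient ψ y⟫ • V y
            - ⟪V y, gradient ψ y⟫ • gradient φ y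
            - ⟪V y, gradient φ y⟫ • gradient ψ y) x :=
  pointwise_divergence_identity_general d φ ψ V hφ hψ hV
end
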